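/- For every n ≥ 9: ZC2(Li_n) < ZC2(PC(1^{n−3}, 2)) < ZC2(PC(1^{n−4}, 2, 1)) < ZC2(PC(1^{n−5}, 2, 1, 1)) < ZC2(PC(1^{n−6}, 2, 1, 1, 1)), and moreover ZC2(PC(1^{n−6}, 2, 1, 1, 1)) = ZC2(PC(1^i, 2, 1^{n−3−i})) for every integer i with ⌊(n−2)/2⌋ ≤ i ≤ n − 7. -/
import Mathlib


noncomputable section
open scoped Classical
open Finset

/-- Taxicab (L¹) distance between two lattice points. -/
def taxicab (u v : ℤ × ℤ) : ℕ := (u.1 - v.1).natAbs + (u.2 - v.2).natAbs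

/-- `c 0, …, c (n-1)` are the lower-left corners of the `n` unit squares of a
polyomino chain: the cells are pairwise distinct and two cells share a common
edge (i.e. their lower-left corners are at taxicab distance 1) iff they are
consecutive in the chain, so that the centers of the squares form a path. -/
def IsPolyominoChain (n : ℕ) (c : ℕ → ℤ × ℤ) : Prop :=
  (∀ i j, i < n → j < n → c i = c j → i = j) ∧
  (∀ i j, i < n → j < n → (taxicab (c i) (c j) = 1 ↔ (i = j + 1 ∨ j = i + 1)))

/-- `v` is a corner of the unit square with lower-left corner `s`. -/
def IsSquareCorner (s v : ℤ × ℤ) : Prop :=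
  v = s ∨ v = s + (1, 0) ∨ v = s + (0, 1) ∨ v = s + (1, 1)

/-- The vertex set of the graph of a polyomino chain: all corners of its squares. -/
def corners (n : ℕ) (c : ℕ → ℤ × ℤ) : Finset (ℤ × ℤ) :=
  (Finset.range n).biUnion fun i => {c i, c i + (1, 0), c i + (0, 1), c i + (1, 1)}

/-- The graph of a polyomino chain: vertices are corners of the squares, and
two corners are adjacent iff they are the endpoints of a unit side of one of
the squares of the chain. -/
def chainGraph (n : ℕ) (c : ℕ → ℤ × ℤ) : SimpleGraph (ℤ × ℤ) :=
  SimpleGraph.fromRel fun u v =>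
    taxicab u v = 1 ∧ ∃ i < n, IsSquareCorner (c i) u ∧ IsSquareCorner (c i) v

/-- `tau n c v` = number of vertices of the chain graph at graph distance exactly 2 from `v`. -/
def tau (n : ℕ) (c : ℕ → ℤ × ℤ) (v : ℤ × ℤ) : ℕ :=
  ((corners n c).filter fun u => (chainGraph n c).dist v u = 2).card

/-- First Zagreb connection index `ZC1 = ∑_{v ∈ V} τ_v²`. -/
def ZC1 (n : ℕ) (c : ℕ → ℤ × ℤ) : ℕ := ∑ v ∈ corners n c, tau n c v ^ 2

/-- Second Zagreb connection index `ZC2 = ∑_{uv ∈ E} τ_u · τ_v`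
(each edge appears twice in the double sum, whence the division by 2). -/
def ZC2 (n : ℕ) (c : ℕ → ℤ × ℤ) : ℕ :=
  (∑ u ∈ corners n c, ∑ v ∈ corners n c,
      if (chainGraph n c).Adj u v then tau n c u * tau n c v else 0) / 2

/-- The link `L_k` (for `3 ≤ k ≤ n`) of a polyomino chain: `1` if the `k`-th
square continues the current straight segment, `2` if it is attached at a kink. -/
def link (c : ℕ → ℤ × ℤ) (k : ℕ) : ℕ :=
  if c (k - 1) - c (k - 2) = c (k - 2) - c (k - 3) then 1 else 2

/-- Indicator of a proposition, as an integer. -/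
def ind (P : Prop) : ℤ := if P then 1 else 0

/-- The chain `c` with `n` squares has `m` segments, of lengths `l 1, …, l m`:
there are cut positions `2 = k 0 < k 1 < ⋯ < k (m-1) < k m = n+1` such that the
kink links (links equal to 2) are exactly at positions `k 1, …, k (m-1)`, and the
`j`-th segment has length `l j = k j - k (j-1) + 1`. -/
def HasSegments (n : ℕ) (c : ℕ → ℤ × ℤ) (m : ℕ) (l : ℕ → ℕ) : Prop :=
  ∃ k : ℕ → ℕ, k 0 = 2 ∧ k m = n + 1 ∧
    (∀ j, 1 ≤ j → j ≤ m → k (j - 1) < k j) ∧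
    (∀ x, 3 ≤ x → x ≤ n → (link c x = 2 ↔ ∃ j, 1 ≤ j ∧ j ≤ m - 1 ∧ k j = x)) ∧
    (∀ j, 1 ≤ j → j ≤ m → l j = k j - k (j - 1) + 1)

/-- The chain `c` with `n` squares has link sequence `L_3, …, L_n`. -/
def HasLinks (n : ℕ) (c : ℕ → ℤ × ℤ) (L : ℕ → ℕ) : Prop :=
  ∀ k, 3 ≤ k → k ≤ n → link c k = L k

/-- The linear chain `Li_n` (all links equal to 1). -/
def linCell : ℕ → ℤ × ℤ := fun i => ((i : ℤ), 0)

/-- The zigzag chain `Z_n` (all links equal to 2). -/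
def zigCell : ℕ → ℤ × ℤ := fun i => ((((i + 1) / 2 : ℕ) : ℤ), ((i / 2 : ℕ) : ℤ))


def memB (n q : ℕ) (v : ℤ × ℤ) : Prop :=
  (0 ≤ v.1 ∧ v.1 ≤ (q:ℤ)+1 ∧ 0 ≤ v.2 ∧ v.2 ≤ 1) ∨
  ((q:ℤ) ≤ v.1 ∧ v.1 ≤ (q:ℤ)+1 ∧ 1 ≤ v.2 ∧ v.2 ≤ (n:ℤ)-(q:ℤ))
def Cfin (n q : ℕ) : Finset (ℤ×ℤ) :=
  (Finset.Icc 0 ((q:ℤ)+1)) ×ˢ (Finset.Icc 0 1) ∪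
  (Finset.Icc (q:ℤ) ((q:ℤ)+1)) ×ˢ (Finset.Icc 1 ((n:ℤ)-(q:ℤ)))
def gam (q : ℕ) (i : ℕ) : ℤ×ℤ := (((min i q : ℕ) : ℤ), ((i - min i q : ℕ) : ℤ))
lemma isc_iff (s v : ℤ×ℤ) : IsSquareCorner s v ↔
    (s.1 ≤ v.1 ∧ v.1 ≤ s.1 + 1 ∧ s.2 ≤ v.2 ∧ v.2 ≤ s.2 + 1) := by
  obtain ⟨s1,s2⟩ := s; obtain ⟨v1,v2⟩ := v
  simp [IsSquareCorner, Prod.ext_iff]; omega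
lemma mem_corners (n : ℕ) (c : ℕ → ℤ×ℤ) (v : ℤ×ℤ) :
    v ∈ corners n c ↔ ∃ i < n, IsSquareCorner (c i) v := by
  simp [corners, IsSquareCorner]
lemma mem_Cfin (n q : ℕ) (v : ℤ×ℤ) : v ∈ Cfin n q ↔ memB n q v := by
  simp [Cfin, memB, Finset.mem_union, Finset.mem_product, Finset.mem_Icc, and_assoc]
lemma gam_le {q i : ℕ} (h : i ≤ q) : gam q i = ((i:ℤ), 0) := by
  simp [gam, min_eq_left h]
lemma gam_gt {q i : ℕ} (h : q < i) : gam q i = ((q:ℤ), (i:ℤ) - (q:ℤ)) := by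
  have h1 : min i q = q := min_eq_right (by omega)
  simp [gam, h1]; omega

lemma memB_of_isc (n q : ℕ) (hqn : q + 1 ≤ n) {i : ℕ} (hi : i < n) {v : ℤ×ℤ}
    (h : IsSquareCorner (gam q i) v) : memB n q v := by
  rw [isc_iff] at h
  rcases le_or_gt i q with hle | hgt
  · rw [gam_le hle] at h; unfold memB
    left; constructor
    · omega
    · refine ⟨?_, by omega, by omega⟩
      have : (i:ℤ) ≤ (q:ℤ) := by exact_mod_cast hle
      omega
  · rw [gam_gt hgt] at h; unfold memB
    right
    have h1 : (i:ℤ) < (n:ℤ) := by exact_mod_cast hi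
    have h2 : (q:ℤ) < (i:ℤ) := by exact_mod_cast hgt
    omega

lemma corners_gam (n q : ℕ) (hqn : q + 1 ≤ n) : corners n (gam q) = Cfin n q := by
  ext v
  rw [mem_corners, mem_Cfin]
  constructor
  · rintro ⟨i, hi, h⟩; exact memB_of_isc n q hqn hi h
  · intro h
    unfold memB at h
    rcases h with ⟨h1, h2, h3, h4⟩ | ⟨h1, h2, h3, h4⟩
    · refine ⟨(v.1 - 1).toNat, by omega, ?_⟩
      rw [isc_iff, gam_le (by omega)]
      simp only []
      omega
    · refine ⟨q + (v.2 - 1).toNat, by omega, ?_⟩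
      rcases Nat.eq_zero_or_pos (v.2 - 1).toNat with h0 | hpos
      · rw [isc_iff, gam_le (by omega)]
        simp only []
        push_cast
        omega
      · rw [isc_iff, gam_gt (by omega)]
        simp only []
        push_cast
        omega


lemma taxicab_comm (u v : ℤ×ℤ) : taxicab u v = taxicab v u := by unfold taxicab; omega

lemma adj_taxicab {n : ℕ} {c : ℕ → ℤ×ℤ} {u v : ℤ×ℤ}
    (h : (chainGraph n c).Adj u v) : taxicab u v = 1 := by
  rw [chainGraph, SimpleGraph.fromRel_adj] at h
  rcases h.2 with h' | h'
  · exact h'.1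
  · rw [taxicab_comm]; exact h'.1

lemma adj_gam (n q : ℕ) (hqn : q + 1 ≤ n) (u v : ℤ×ℤ) :
    (chainGraph n (gam q)).Adj u v ↔ (memB n q u ∧ memB n q v ∧ taxicab u v = 1) := by
  rw [chainGraph, SimpleGraph.fromRel_adj]
  constructor
  · rintro ⟨hne, h | h⟩
    · obtain ⟨ht, i, hi, h1, h2⟩ := h
      exact ⟨memB_of_isc n q hqn hi h1, memB_of_isc n q hqn hi h2, ht⟩
    · obtain ⟨ht, i, hi, h1, h2⟩ := h
      exact ⟨memB_of_isc n q hqn hi h2, memB_of_isc n q hqn hi h1,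
        by rw [taxicab_comm]; exact ht⟩
  · rintro ⟨hu, hv, ht⟩
    have hne : u ≠ v := by
      intro h; subst h; unfold taxicab at ht; omega
    refine ⟨hne, Or.inl ⟨ht, ?_⟩⟩
    unfold memB at hu hv
    unfold taxicab at ht
    by_cases hy : u.2 = v.2
    · -- horizontal edge
      by_cases h2 : u.2 ≤ 1
      · refine ⟨(min u.1 v.1).toNat, by omega, ?_, ?_⟩ <;>
        · rw [isc_iff, gam_le (by omega)]; omega
      · refine ⟨q + (u.2 - 1).toNat, by omega, ?_, ?_⟩ <;>
        · rw [isc_iff, gam_gt (by omega)]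
          push_cast; omega
    · -- vertical edge
      have hx : u.1 = v.1 := by omega
      by_cases h2 : min u.2 v.2 ≤ 0
      · refine ⟨(u.1 - 1).toNat, by omega, ?_, ?_⟩ <;>
        · rw [isc_iff, gam_le (by omega)]; omega
      · refine ⟨q + (min u.2 v.2).toNat, by omega, ?_, ?_⟩ <;>
        · rw [isc_iff, gam_gt (by omega)]
          push_cast; omega

lemma midpoint_exists (n q : ℕ) {u v : ℤ×ℤ} (hu : memB n q u) (hv : memB n q v)
    (ht : taxicab u v = 2) :
    ∃ w, memB n q w ∧ taxicab u w = 1 ∧ taxicab w v = 1 := by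
  unfold memB at hu hv ⊢
  unfold taxicab at ht ⊢
  by_cases hx2 : (u.1 - v.1).natAbs = 2
  · exact ⟨(min u.1 v.1 + 1, u.2), by omega⟩
  · by_cases hx0 : (u.1 - v.1).natAbs = 0
    · exact ⟨(u.1, min u.2 v.2 + 1), by omega⟩
    · have hcand : ((0 ≤ u.1 ∧ u.1 ≤ (q:ℤ)+1 ∧ 0 ≤ v.2 ∧ v.2 ≤ 1) ∨
          ((q:ℤ) ≤ u.1 ∧ u.1 ≤ (q:ℤ)+1 ∧ 1 ≤ v.2 ∧ v.2 ≤ (n:ℤ)-(q:ℤ))) ∨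
          ((0 ≤ v.1 ∧ v.1 ≤ (q:ℤ)+1 ∧ 0 ≤ u.2 ∧ u.2 ≤ 1) ∨
          ((q:ℤ) ≤ v.1 ∧ v.1 ≤ (q:ℤ)+1 ∧ 1 ≤ u.2 ∧ u.2 ≤ (n:ℤ)-(q:ℤ))) := by omega
      rcases hcand with h | h
      · exact ⟨(u.1, v.2), by omega⟩
      · exact ⟨(v.1, u.2), by omega⟩

lemma walk_taxicab {n : ℕ} {c : ℕ → ℤ×ℤ} {u v : ℤ×ℤ}
    (p : (chainGraph n c).Walk u v) : taxicab u v ≤ p.length := by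
  induction p with
  | nil => unfold taxicab; simp
  | @cons a b d hadj p ih =>
      have h1 := adj_taxicab hadj
      have h3 : taxicab a d ≤ taxicab a b + taxicab b d := by unfold taxicab; omega
      simp only [SimpleGraph.Walk.length_cons]
      omega

lemma dist2_gam (n q : ℕ) (hqn : q + 1 ≤ n) (u v : ℤ×ℤ)
    (hu : memB n q u) (hv : memB n q v) :
    (chainGraph n (gam q)).dist u v = 2 ↔ taxicab u v = 2 := by
  constructor
  · intro hd
    have hne : u ≠ v := by
      intro h; subst h; simp [SimpleGraph.dist_self] at hd
    have hr : (chainGraph n (gam q)).Reachable u v := by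
      by_contra hnr
      rw [SimpleGraph.dist_eq_zero_of_not_reachable hnr] at hd; omega
    obtain ⟨p, hp⟩ := hr.exists_walk_length_eq_dist
    have hle : taxicab u v ≤ 2 := by
      have := walk_taxicab p; omega
    have hne1 : taxicab u v ≠ 1 := by
      intro h1
      have : (chainGraph n (gam q)).Adj u v := (adj_gam n q hqn u v).2 ⟨hu, hv, h1⟩
      rw [SimpleGraph.dist_eq_one_iff_adj.2 this] at hd; omega
    have hne0 : taxicab u v ≠ 0 := by
      intro h0
      apply hne
      obtain ⟨u1,u2⟩ := u; obtain ⟨v1,v2⟩ := v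
      unfold taxicab at h0; simp [Prod.ext_iff]; omega
    omega
  · intro ht
    obtain ⟨w, hw, h1, h2⟩ := midpoint_exists n q hu hv ht
    have ha1 : (chainGraph n (gam q)).Adj u w := (adj_gam n q hqn u w).2 ⟨hu, hw, h1⟩
    have ha2 : (chainGraph n (gam q)).Adj w v := (adj_gam n q hqn w v).2 ⟨hw, hv, h2⟩
    have hle : (chainGraph n (gam q)).dist u v ≤ 2 := by
      have h := SimpleGraph.dist_le
        (SimpleGraph.Walk.cons ha1 (SimpleGraph.Walk.cons ha2 SimpleGraph.Walk.nil))
      simpa using h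
    have hp : (chainGraph n (gam q)).Walk u v :=
      SimpleGraph.Walk.cons ha1 (SimpleGraph.Walk.cons ha2 SimpleGraph.Walk.nil)
    have hne1 : (chainGraph n (gam q)).dist u v ≠ 1 := by
      intro h1
      have := SimpleGraph.dist_eq_one_iff_adj.1 h1
      have := adj_taxicab this; omega
    have hne0 : (chainGraph n (gam q)).dist u v ≠ 0 := by
      intro h0
      rw [SimpleGraph.dist_eq_zero_iff_eq_or_not_reachable] at h0
      rcases h0 with h0 | h0
      · subst h0; unfold taxicab at ht; omega
      · exact h0 ⟨hp⟩
    omega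

instance memB.dec (n q : ℕ) (v : ℤ×ℤ) : Decidable (memB n q v) := by
  unfold memB; infer_instance
def D8 : Finset (ℤ×ℤ) := {(2,0),(-2,0),(0,2),(0,-2),(1,1),(1,-1),(-1,1),(-1,-1)}
def D4 : Finset (ℤ×ℤ) := {(1,0),(-1,0),(0,1),(0,-1)}
def tP (P : ℤ×ℤ → Prop) [DecidablePred P] (v : ℤ×ℤ) : ℕ :=
  ∑ δ ∈ D8, if P (v+δ) then 1 else 0
def FP (P : ℤ×ℤ → Prop) [DecidablePred P] (v : ℤ×ℤ) : ℕ :=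
  ∑ δ ∈ D4, if P (v+δ) then tP P v * tP P (v+δ) else 0
def Nf (n q : ℕ) : ℕ := ∑ v ∈ Cfin n q, FP (memB n q) v


lemma mem_D8 (z : ℤ×ℤ) : z ∈ D8 ↔ z.1.natAbs + z.2.natAbs = 2 := by
  obtain ⟨a,b⟩ := z
  simp only [D8, Finset.mem_insert, Finset.mem_singleton, Prod.ext_iff]
  omega

lemma mem_D4 (z : ℤ×ℤ) : z ∈ D4 ↔ z.1.natAbs + z.2.natAbs = 1 := by
  obtain ⟨a,b⟩ := z
  simp only [D4, Finset.mem_insert, Finset.mem_singleton, Prod.ext_iff]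
  omega

lemma tau_gam (n q : ℕ) (hqn : q + 1 ≤ n) (v : ℤ×ℤ) (hv : memB n q v) :
    tau n (gam q) v = tP (memB n q) v := by
  unfold tau
  rw [corners_gam n q hqn]
  have h1 : (Cfin n q).filter (fun u => (chainGraph n (gam q)).dist v u = 2)
      = (Cfin n q).filter (fun u => taxicab v u = 2) := by
    apply Finset.filter_congr
    intro u hu
    rw [mem_Cfin] at hu
    exact dist2_gam n q hqn v u hv hu
  rw [h1]
  have h2 : (Cfin n q).filter (fun u => taxicab v u = 2)
      = (D8.filter fun δ => memB n q (v + δ)).image (fun δ => v + δ) := by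
    ext u
    simp only [Finset.mem_filter, Finset.mem_image, mem_Cfin]
    constructor
    · rintro ⟨hm, ht⟩
      refine ⟨u - v, ⟨?_, ?_⟩, by ring⟩
      · rw [mem_D8]; unfold taxicab at ht
        simp only [Prod.fst_sub, Prod.snd_sub]; omega
      · have hvu : v + (u - v) = u := by ring
        rwa [hvu]
    · rintro ⟨δ, ⟨hδ, hmem⟩, rfl⟩
      refine ⟨hmem, ?_⟩
      rw [mem_D8] at hδ; unfold taxicab
      simp only [Prod.fst_add, Prod.snd_add] at *; omega
  rw [h2, Finset.card_image_of_injective _ (add_right_injective v)]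
  unfold tP
  rw [Finset.card_filter]

lemma ZC2_gam (n q : ℕ) (hqn : q + 1 ≤ n) : ZC2 n (gam q) = Nf n q / 2 := by
  unfold ZC2 Nf
  congr 1
  rw [corners_gam n q hqn]
  apply Finset.sum_congr rfl
  intro u hu
  rw [mem_Cfin] at hu
  have hfil : (Cfin n q).filter (fun v => (chainGraph n (gam q)).Adj u v)
      = (D4.filter fun δ => memB n q (u + δ)).image (fun δ => u + δ) := by
    ext v
    simp only [Finset.mem_filter, Finset.mem_image, mem_Cfin]
    constructor
    · rintro ⟨hm, hadj⟩
      rw [adj_gam n q hqn] at hadj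
      refine ⟨v - u, ⟨?_, ?_⟩, by ring⟩
      · rw [mem_D4]
        have := hadj.2.2; unfold taxicab at this
        simp only [Prod.fst_sub, Prod.snd_sub]; omega
      · have hvu : u + (v - u) = v := by ring
        rwa [hvu]
    · rintro ⟨δ, ⟨hδ, hmem⟩, rfl⟩
      refine ⟨hmem, ?_⟩
      rw [adj_gam n q hqn]
      refine ⟨hu, hmem, ?_⟩
      rw [mem_D4] at hδ; unfold taxicab
      simp only [Prod.fst_add, Prod.snd_add] at *; omega
  calc ∑ v ∈ Cfin n q, (if (chainGraph n (gam q)).Adj u v then tau n (gam q) u * tau n (gam q) v else 0)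
      = ∑ v ∈ (Cfin n q).filter (fun v => (chainGraph n (gam q)).Adj u v),
          tau n (gam q) u * tau n (gam q) v := by rw [Finset.sum_filter]
    _ = ∑ v ∈ (Cfin n q).filter (fun v => (chainGraph n (gam q)).Adj u v),
          tP (memB n q) u * tP (memB n q) v := by
          apply Finset.sum_congr rfl
          intro v hv
          rw [Finset.mem_filter, mem_Cfin] at hv
          rw [tau_gam n q hqn u hu, tau_gam n q hqn v hv.1]
    _ = ∑ δ ∈ D4.filter (fun δ => memB n q (u + δ)),
          tP (memB n q) u * tP (memB n q) (u + δ) := by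
          rw [hfil, Finset.sum_image]
          intro a _ b _ h
          exact add_left_cancel h
    _ = FP (memB n q) u := by rw [FP, Finset.sum_filter]

lemma dist_le_transfer {V : Type*} (G H : SimpleGraph V) (e : V ≃ V)
    (h : ∀ x y, H.Adj (e x) (e y) ↔ G.Adj x y) (x y : V) :
    H.dist (e x) (e y) ≤ G.dist x y := by
  by_cases hr : G.Reachable x y
  · obtain ⟨p, hp⟩ := hr.exists_walk_length_eq_dist
    let φ : G →g H := ⟨e.toFun, fun {a b} hab => (h a b).2 hab⟩
    have := SimpleGraph.dist_le (p.map φ)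
    rwa [SimpleGraph.Walk.length_map, hp] at this
  · rw [SimpleGraph.dist_eq_zero_of_not_reachable hr,
        SimpleGraph.dist_eq_zero_of_not_reachable]
    intro ⟨p⟩
    apply hr
    let ψ : H →g G := ⟨e.symm, fun {a b} hab => by
      apply (h (e.symm a) (e.symm b)).1
      simpa using hab⟩
    have hx : e.symm (e x) = x := e.symm_apply_apply x
    have hy : e.symm (e y) = y := e.symm_apply_apply y
    have w := p.map ψ
    rw [show ψ (e x) = x from hx, show ψ (e y) = y from hy] at w
    exact ⟨w⟩

lemma dist_transfer {V : Type*} (G H : SimpleGraph V) (e : V ≃ V)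
    (h : ∀ x y, H.Adj (e x) (e y) ↔ G.Adj x y) (x y : V) :
    H.dist (e x) (e y) = G.dist x y := by
  apply le_antisymm (dist_le_transfer G H e h x y)
  have h' : ∀ x y, G.Adj (e.symm x) (e.symm y) ↔ H.Adj x y := by
    intro a b
    rw [← h (e.symm a) (e.symm b)]
    simp
  have := dist_le_transfer H G e.symm h' (e x) (e y)
  simpa using this

lemma equiv_transfer (n : ℕ) (c γ : ℕ → ℤ×ℤ) (e : ℤ×ℤ ≃ ℤ×ℤ)
    (htx : ∀ x y, taxicab (e x) (e y) = taxicab x y)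
    (hsc : ∀ i, i < n → ∀ v, (IsSquareCorner (c i) (e v) ↔ IsSquareCorner (γ i) v)) :
    ZC2 n c = ZC2 n γ := by
  have hadj : ∀ x y, (chainGraph n c).Adj (e x) (e y) ↔ (chainGraph n γ).Adj x y := by
    intro x y
    rw [chainGraph, chainGraph, SimpleGraph.fromRel_adj, SimpleGraph.fromRel_adj]
    apply and_congr
    · simp
    · apply or_congr <;>
      · apply and_congr
        · rw [htx]
        · constructor
          · rintro ⟨i, hi, h1, h2⟩
            exact ⟨i, hi, (hsc i hi _).1 h1, (hsc i hi _).1 h2⟩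
          · rintro ⟨i, hi, h1, h2⟩
            exact ⟨i, hi, (hsc i hi _).2 h1, (hsc i hi _).2 h2⟩
  have hcor : corners n c = (corners n γ).image e := by
    ext v
    rw [mem_corners, Finset.mem_image]
    constructor
    · rintro ⟨i, hi, h⟩
      refine ⟨e.symm v, ?_, by simp⟩
      rw [mem_corners]
      refine ⟨i, hi, ?_⟩
      rw [← hsc i hi (e.symm v)]
      simpa using h
    · rintro ⟨u, hu, rfl⟩
      rw [mem_corners] at hu
      obtain ⟨i, hi, h⟩ := hu
      exact ⟨i, hi, (hsc i hi u).2 h⟩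
  have hdist : ∀ x y, (chainGraph n c).dist (e x) (e y) = (chainGraph n γ).dist x y :=
    dist_transfer _ _ e hadj
  have htau : ∀ v, tau n c (e v) = tau n γ v := by
    intro v
    unfold tau
    rw [hcor, Finset.filter_image, Finset.card_image_of_injective _ e.injective]
    congr 1
    apply Finset.filter_congr
    intro u _
    rw [hdist]
  unfold ZC2
  congr 1
  rw [hcor, Finset.sum_image (fun a _ b _ h => e.injective h)]
  apply Finset.sum_congr rfl
  intro u _
  rw [Finset.sum_image (fun a _ b _ h => e.injective h)]
  apply Finset.sum_congr rfl
  intro v _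
  simp only [hadj, htau]

lemma affine_case (n : ℕ) (c γ : ℕ → ℤ×ℤ) (c0 : ℤ×ℤ) (a11 a12 a21 a22 m1 m2 : ℤ)
    (habs : ∀ z1 z2 : ℤ, (a11*z1 + a12*z2).natAbs + (a21*z1 + a22*z2).natAbs
        = z1.natAbs + z2.natAbs)
    (hsq : ∀ a b : ℤ, (0 ≤ a11*a + a12*b - m1 ∧ a11*a + a12*b - m1 ≤ 1 ∧
        0 ≤ a21*a + a22*b - m2 ∧ a21*a + a22*b - m2 ≤ 1) ↔
        (0 ≤ a ∧ a ≤ 1 ∧ 0 ≤ b ∧ b ≤ 1))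
    (hinv : ∀ z1 z2 : ℤ, a11*(a11*z1+a12*z2) + a21*(a21*z1+a22*z2) = z1 ∧
        a12*(a11*z1+a12*z2) + a22*(a21*z1+a22*z2) = z2)
    (hinv2 : ∀ z1 z2 : ℤ, a11*(a11*z1+a21*z2) + a12*(a12*z1+a22*z2) = z1 ∧
        a21*(a11*z1+a21*z2) + a22*(a12*z1+a22*z2) = z2)
    (hform : ∀ i, i < n → c i = (c0.1 + (γ i).1 * a11 + (γ i).2 * a12,
                                 c0.2 + (γ i).1 * a21 + (γ i).2 * a22)) :
    ZC2 n c = ZC2 n γ := by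
  set f : ℤ×ℤ → ℤ×ℤ := fun v => (c0.1 - m1 + a11*v.1 + a12*v.2, c0.2 - m2 + a21*v.1 + a22*v.2)
    with hf
  set g : ℤ×ℤ → ℤ×ℤ := fun y =>
      (a11*(y.1-c0.1+m1) + a21*(y.2-c0.2+m2), a12*(y.1-c0.1+m1) + a22*(y.2-c0.2+m2)) with hg
  have hleft : ∀ v, g (f v) = v := by
    intro v
    have h := hinv v.1 v.2
    simp only [hf, hg, Prod.ext_iff]
    constructor
    · linear_combination h.1
    · linear_combination h.2
  have hright : ∀ y, f (g y) = y := by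
    intro y
    have h := hinv2 (y.1-c0.1+m1) (y.2-c0.2+m2)
    simp only [hf, hg, Prod.ext_iff]
    constructor
    · linear_combination h.1
    · linear_combination h.2
  let e : ℤ×ℤ ≃ ℤ×ℤ := ⟨f, g, hleft, hright⟩
  apply equiv_transfer n c γ e
  · intro x y
    show taxicab (f x) (f y) = taxicab x y
    unfold taxicab
    have e1 : (f x).1 - (f y).1 = a11*(x.1-y.1) + a12*(x.2-y.2) := by simp only [hf]; ring
    have e2 : (f x).2 - (f y).2 = a21*(x.1-y.1) + a22*(x.2-y.2) := by simp only [hf]; ring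
    rw [e1, e2, habs]
  · intro i hi v
    show IsSquareCorner (c i) (f v) ↔ IsSquareCorner (γ i) v
    rw [isc_iff, isc_iff]
    have hsqi := hsq (v.1 - (γ i).1) (v.2 - (γ i).2)
    have e1 : (f v).1 - (c i).1 = a11*(v.1-(γ i).1) + a12*(v.2-(γ i).2) - m1 := by
      rw [hform i hi]; simp only [hf]; ring
    have e2 : (f v).2 - (c i).2 = a21*(v.1-(γ i).1) + a22*(v.2-(γ i).2) - m2 := by
      rw [hform i hi]; simp only [hf]; ring
    constructor
    · intro h
      have h2 := hsqi.mp ⟨by linarith, by linarith, by linarith, by linarith⟩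
      exact ⟨by linarith [h2.1], by linarith [h2.2.1], by linarith [h2.2.2.1],
        by linarith [h2.2.2.2]⟩
    · intro h
      have h2 := hsqi.mpr ⟨by linarith [h.1], by linarith [h.2.1], by linarith [h.2.2.1],
        by linarith [h.2.2.2]⟩
      exact ⟨by linarith [h2.1], by linarith [h2.2.1], by linarith [h2.2.2.1],
        by linarith [h2.2.2.2]⟩

lemma unit_cases {u : ℤ×ℤ} (h : taxicab u 0 = 1) :
    u = (1,0) ∨ u = (-1,0) ∨ u = (0,1) ∨ u = (0,-1) := by
  obtain ⟨a,b⟩ := u; unfold taxicab at h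
  simp only [Prod.ext_iff, Prod.fst_zero, Prod.snd_zero] at *
  omega

lemma affine_transfer (n : ℕ) (c γ : ℕ → ℤ×ℤ) (c0 u w : ℤ×ℤ)
    (hu : taxicab u 0 = 1) (hw : taxicab w 0 = 1) (hwu : w ≠ u) (hwu0 : w + u ≠ 0)
    (hform : ∀ i, i < n → c i = (c0.1 + (γ i).1 * u.1 + (γ i).2 * w.1,
                                 c0.2 + (γ i).1 * u.2 + (γ i).2 * w.2)) :
    ZC2 n c = ZC2 n γ := by
  rcases unit_cases hu with rfl | rfl | rfl | rfl <;>
    rcases unit_cases hw with rfl | rfl | rfl | rfl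
  · exact absurd rfl hwu
  · exact absurd (by decide) hwu0
  · exact affine_case n c γ c0 (1) (0) (0) (1) (0) (0) (by intro z1 z2; omega) (by intro a b; omega) (by intro z1 z2; omega) (by intro z1 z2; omega) hform
  · exact affine_case n c γ c0 (1) (0) (0) (-1) (0) (-1) (by intro z1 z2; omega) (by intro a b; omega) (by intro z1 z2; omega) (by intro z1 z2; omega) hform
  · exact absurd (by decide) hwu0
  · exact absurd rfl hwu
  · exact affine_case n c γ c0 (-1) (0) (0) (1) (-1) (0) (by intro z1 z2; omega) (by intro a b; omega) (by intro z1 z2; omega) (by intro z1 z2; omega) hform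
  · exact affine_case n c γ c0 (-1) (0) (0) (-1) (-1) (-1) (by intro z1 z2; omega) (by intro a b; omega) (by intro z1 z2; omega) (by intro z1 z2; omega) hform
  · exact affine_case n c γ c0 (0) (1) (1) (0) (0) (0) (by intro z1 z2; omega) (by intro a b; omega) (by intro z1 z2; omega) (by intro z1 z2; omega) hform
  · exact affine_case n c γ c0 (0) (-1) (1) (0) (-1) (0) (by intro z1 z2; omega) (by intro a b; omega) (by intro z1 z2; omega) (by intro z1 z2; omega) hform
  · exact absurd rfl hwu
  · exact absurd (by decide) hwu0
  · exact affine_case n c γ c0 (0) (1) (-1) (0) (0) (-1) (by intro z1 z2; omega) (by intro a b; omega) (by intro z1 z2; omega) (by intro z1 z2; omega) hform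
  · exact affine_case n c γ c0 (0) (-1) (-1) (0) (-1) (-1) (by intro z1 z2; omega) (by intro a b; omega) (by intro z1 z2; omega) (by intro z1 z2; omega) hform
  · exact absurd (by decide) hwu0
  · exact absurd rfl hwu


lemma taxicab_sub0 (a b : ℤ×ℤ) : taxicab (a - b) 0 = taxicab a b := by
  unfold taxicab
  simp only [Prod.fst_sub, Prod.snd_sub, Prod.fst_zero, Prod.snd_zero, sub_zero]

lemma classify (n p : ℕ) (c : ℕ → ℤ×ℤ) (hn : 3 ≤ n) (hp3 : 3 ≤ p) (hpn : p ≤ n + 1)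
    (hc : IsPolyominoChain n c)
    (hL : ∀ k, 3 ≤ k → k ≤ n → link c k = if k = p then 2 else 1) :
    ∃ u w : ℤ×ℤ, taxicab u 0 = 1 ∧ taxicab w 0 = 1 ∧ w ≠ u ∧ w + u ≠ 0 ∧
      ∀ i, i < n → c i = ((c 0).1 + (gam (p-2) i).1 * u.1 + (gam (p-2) i).2 * w.1,
                          (c 0).2 + (gam (p-2) i).1 * u.2 + (gam (p-2) i).2 * w.2) := by
  obtain ⟨hinj, hadj⟩ := hc
  have hstep : ∀ i, i + 1 < n → taxicab (c (i+1)) (c i) = 1 :=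
    fun i hi => (hadj (i+1) i (by omega) (by omega)).mpr (Or.inl rfl)
  have hnb : ∀ i, i + 2 < n → c (i+2) ≠ c i := by
    intro i hi h
    have := hinj (i+2) i (by omega) (by omega) h
    omega
  have hld : ∀ j, j + 3 ≤ n → j + 3 ≠ p → c (j+2) - c (j+1) = c (j+1) - c j := by
    intro j h3 hjp
    have h := hL (j+3) (by omega) h3
    rw [if_neg hjp] at h
    unfold link at h
    have e1 : j + 3 - 1 = j + 2 := by omega
    have e2 : j + 3 - 2 = j + 1 := by omega
    have e3 : j + 3 - 3 = j := by omega
    rw [e1, e2, e3] at h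
    by_contra hC
    rw [if_neg hC] at h
    norm_num at h
  have hA : ∀ j, j + 1 ≤ n - 1 → j + 3 ≤ p → c (j+1) - c j = c 1 - c 0 := by
    intro j
    induction j with
    | zero => intro _ _; rfl
    | succ j ih =>
        intro h1 h2
        have hd : c (j+2) - c (j+1) = c (j+1) - c j := hld j (by omega) (by omega)
        rw [show j + 1 + 1 = j + 2 from rfl, hd]
        exact ih (by omega) (by omega)
  set u : ℤ×ℤ := c 1 - c 0 with hudef
  have hu : taxicab u 0 = 1 := by
    rw [hudef, taxicab_sub0]; exact hstep 0 (by omega)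
  by_cases hp : p ≤ n
  · -- kinked chain
    have hB : ∀ j, p - 2 ≤ j → j + 1 ≤ n - 1 → c (j+1) - c j = c (p-1) - c (p-2) := by
      intro j hj
      induction j, hj using Nat.le_induction with
      | base =>
          intro _
          have e : p - 2 + 1 = p - 1 := by omega
          rw [e]
      | succ j hj ih =>
          intro h1
          have hd : c (j+2) - c (j+1) = c (j+1) - c j := hld j (by omega) (by omega)
          rw [show j + 1 + 1 = j + 2 from rfl, hd]
          exact ih (by omega)
    set w : ℤ×ℤ := c (p-1) - c (p-2) with hwdef
    have hw : taxicab w 0 = 1 := by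
      rw [hwdef, taxicab_sub0]
      have := hstep (p-2) (by omega)
      have e : p - 2 + 1 = p - 1 := by omega
      rwa [e] at this
    have hdp3 : c (p-2) - c (p-3) = u := by
      have := hA (p-3) (by omega) (by omega)
      have e : p - 3 + 1 = p - 2 := by omega
      rwa [e] at this
    have hwu : w ≠ u := by
      intro h
      have hl := hL p (by omega) hp
      rw [if_pos rfl] at hl
      unfold link at hl
      rw [if_pos (by rw [← hdp3] at h; exact h)] at hl
      norm_num at hl
    have hwu0 : w + u ≠ 0 := by
      intro h
      apply hnb (p-3) (by omega)
      have e : p - 3 + 2 = p - 1 := by omega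
      rw [e]
      have hsum : c (p-1) = c (p-3) + (w + u) := by
        rw [hwdef, ← hdp3]; ring
      rw [h, add_zero] at hsum
      exact hsum
    refine ⟨u, w, hu, hw, hwu, hwu0, ?_⟩
    intro i
    induction i with
    | zero =>
        intro _
        rw [gam_le (Nat.zero_le _)]
        simp
    | succ i ih =>
        intro hi1
        have ihh := ih (by omega)
        rcases le_or_gt (i+1) (p-2) with hle | hgt
        · have hd : c (i+1) - c i = u := hA i (by omega) (by omega)
          have hr : c (i+1) = c i + u := by rw [← hd]; ring
          rw [hr, ihh, gam_le hle, gam_le (by omega : i ≤ p - 2)]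
          simp only [Prod.ext_iff, Prod.fst_add, Prod.snd_add]
          constructor <;> (push_cast; ring)
        · have hd : c (i+1) - c i = w := by
            rw [hwdef]; exact hB i (by omega) (by omega)
          have hr : c (i+1) = c i + w := by rw [← hd]; ring
          rw [hr, ihh, gam_gt hgt]
          rcases le_or_gt i (p-2) with hle2 | hgt2
          · have hiq' : (i:ℤ) = ((p-2:ℕ):ℤ) := by
              have : i = p - 2 := by omega
              exact_mod_cast this
            rw [gam_le hle2]
            simp only [Prod.ext_iff, Prod.fst_add, Prod.snd_add]
            constructor <;> (push_cast; rw [hiq']; push_cast; ring)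
          · rw [gam_gt hgt2]
            simp only [Prod.ext_iff, Prod.fst_add, Prod.snd_add]
            constructor <;> (push_cast; ring)
  · -- linear chain
    have hp1 : p = n + 1 := by omega
    have hufacts : u.1.natAbs + u.2.natAbs = 1 := by
      unfold taxicab at hu
      simp only [Prod.fst_zero, Prod.snd_zero, sub_zero] at hu
      exact hu
    refine ⟨u, (-u.2, u.1), hu, ?_, ?_, ?_, ?_⟩
    · unfold taxicab
      simp only [Prod.fst_zero, Prod.snd_zero, sub_zero]
      omega
    · intro h
      rw [Prod.ext_iff] at h
      obtain ⟨h1, h2⟩ := h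
      omega
    · intro h
      rw [Prod.ext_iff] at h
      simp only [Prod.fst_add, Prod.snd_add, Prod.fst_zero, Prod.snd_zero] at h
      obtain ⟨h1, h2⟩ := h
      omega
    · intro i
      induction i with
      | zero =>
          intro _
          rw [gam_le (Nat.zero_le _)]
          simp
      | succ i ih =>
          intro hi1
          have ihh := ih (by omega)
          have hle : i + 1 ≤ p - 2 := by omega
          have hd : c (i+1) - c i = u := hA i (by omega) (by omega)
          have hr : c (i+1) = c i + u := by rw [← hd]; ring
          rw [hr, ihh, gam_le hle, gam_le (by omega : i ≤ p - 2)]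
          simp only [Prod.ext_iff, Prod.fst_add, Prod.snd_add]
          constructor <;> (push_cast; ring)

def PA (u : ℤ×ℤ) : Prop := 0 ≤ u.1 ∧ 0 ≤ u.2 ∧ u.2 ≤ 1
def Qmid (u : ℤ×ℤ) : Prop := 0 ≤ u.2 ∧ u.2 ≤ 1
def Qv (u : ℤ×ℤ) : Prop := 0 ≤ u.1 ∧ u.1 ≤ 1
def Ptail (s : ℕ) (u : ℤ×ℤ) : Prop :=
  (u.1 ≤ 4 ∧ 0 ≤ u.2 ∧ u.2 ≤ 1) ∨ (3 ≤ u.1 ∧ u.1 ≤ 4 ∧ 1 ≤ u.2 ∧ u.2 ≤ (s:ℤ)+1)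
def P3 (u : ℤ×ℤ) : Prop := (u.1 ≤ 4 ∧ 0 ≤ u.2 ∧ u.2 ≤ 1) ∨ (3 ≤ u.1 ∧ u.1 ≤ 4 ∧ 1 ≤ u.2)
def P5 (u : ℤ×ℤ) : Prop := 0 ≤ u.1 ∧ u.1 ≤ 1 ∧ u.2 ≤ 3
instance : DecidablePred PA := fun v => by unfold PA; infer_instance
instance : DecidablePred Qmid := fun v => by unfold Qmid; infer_instance
instance : DecidablePred Qv := fun v => by unfold Qv; infer_instance
instance (s : ℕ) : DecidablePred (Ptail s) := fun v => by unfold Ptail; infer_instance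
instance : DecidablePred P3 := fun v => by unfold P3; infer_instance
instance : DecidablePred P5 := fun v => by unfold P5; infer_instance
def SA : Finset (ℤ×ℤ) := (Finset.Icc (0:ℤ) 2) ×ˢ (Finset.Icc (0:ℤ) 1)
def Stail (s : ℕ) : Finset (ℤ×ℤ) :=
  (Finset.Icc (0:ℤ) 4) ×ˢ (Finset.Icc (0:ℤ) 1) ∪ (Finset.Icc (3:ℤ) 4) ×ˢ (Finset.Icc (2:ℤ) ((s:ℤ)+1))
def S3 : Finset (ℤ×ℤ) :=
  (Finset.Icc (0:ℤ) 4) ×ˢ (Finset.Icc (0:ℤ) 1) ∪ (Finset.Icc (3:ℤ) 4) ×ˢ (Finset.Icc (2:ℤ) 3)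
def S5 : Finset (ℤ×ℤ) := (Finset.Icc (0:ℤ) 1) ×ˢ (Finset.Icc (0:ℤ) 3)
def TKval : ℕ → ℕ
  | 0 => 354 | 1 => 490 | 2 => 606 | 3 => 708 | 4 => 806 | _ => 902

lemma tP_congr (P Q : ℤ×ℤ → Prop) [DecidablePred P] [DecidablePred Q] (v c δ : ℤ×ℤ)
    (hδ : δ.1.natAbs + δ.2.natAbs ≤ 1)
    (h : ∀ z : ℤ×ℤ, z.1.natAbs + z.2.natAbs ≤ 3 → (P (v+z) ↔ Q (c+z))) :
    tP P (v+δ) = tP Q (c+δ) := by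
  unfold tP
  apply Finset.sum_congr rfl
  intro ε hε
  rw [mem_D8] at hε
  have h1 : v + δ + ε = v + (δ + ε) := by ring
  have h2 : c + δ + ε = c + (δ + ε) := by ring
  have hb : (δ+ε).1.natAbs + (δ+ε).2.natAbs ≤ 3 := by
    simp only [Prod.fst_add, Prod.snd_add]; omega
  rw [h1, h2, if_congr (h _ hb) rfl rfl]

lemma FP_congr (P Q : ℤ×ℤ → Prop) [DecidablePred P] [DecidablePred Q] (v c : ℤ×ℤ)
    (h : ∀ z : ℤ×ℤ, z.1.natAbs + z.2.natAbs ≤ 3 → (P (v+z) ↔ Q (c+z))) :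
    FP P v = FP Q c := by
  unfold FP
  apply Finset.sum_congr rfl
  intro δ hδ
  rw [mem_D4] at hδ
  have h0 : P (v + δ) ↔ Q (c + δ) := h δ (by omega)
  have t0 : tP P v = tP Q c := by
    have := tP_congr P Q v c 0 (by simp) h
    simpa using this
  have t1 : tP P (v+δ) = tP Q (c+δ) := tP_congr P Q v c δ (by omega) h
  rw [if_congr h0 rfl rfl, t0, t1]

lemma tail_const : ∀ s, s ≤ 5 → ∑ w ∈ Stail s, FP (Ptail s) w = TKval s := by
  intro s hs
  interval_cases s <;> decide

lemma sumA (n q : ℕ) (hq : 6 ≤ q) : ∑ v ∈ SA, FP (memB n q) v = 162 := by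
  have h : ∀ v ∈ SA, FP (memB n q) v = FP PA v := by
    intro v hv
    simp only [SA, Finset.mem_product, Finset.mem_Icc] at hv
    apply FP_congr
    intro z hz
    unfold memB PA
    simp only [Prod.fst_add, Prod.snd_add]
    omega
  rw [Finset.sum_congr rfl h]
  decide

lemma Fmid (n q : ℕ) (hq : 6 ≤ q) (v : ℤ×ℤ) (hy : 0 ≤ v.2 ∧ v.2 ≤ 1)
    (h3 : 3 ≤ v.1) (h4 : v.1 ≤ (q:ℤ)-4) : FP (memB n q) v = 48 := by
  have h48 : FP (memB n q) v = FP Qmid ((0:ℤ), v.2) := by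
    apply FP_congr
    intro z hz
    unfold memB Qmid
    simp only [Prod.fst_add, Prod.snd_add]
    omega
  rcases (by omega : v.2 = 0 ∨ v.2 = 1) with hy2 | hy2 <;> rw [h48, hy2]
  · decide
  · decide

lemma Fvert (n q : ℕ) (hq : 6 ≤ q) (v : ℤ×ℤ) (hx : (q:ℤ) ≤ v.1 ∧ v.1 ≤ (q:ℤ)+1)
    (hy4 : 4 ≤ v.2) (hyt : v.2 ≤ (n:ℤ)-(q:ℤ)-4) : FP (memB n q) v = 48 := by
  have h48 : FP (memB n q) v = FP Qv (v.1 - (q:ℤ), 0) := by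
    apply FP_congr
    intro z hz
    unfold memB Qv
    simp only [Prod.fst_add, Prod.snd_add]
    omega
  rcases (by omega : v.1 - (q:ℤ) = 0 ∨ v.1 - (q:ℤ) = 1) with hx2 | hx2 <;> rw [h48, hx2]
  · decide
  · decide

lemma Nf_split (n q : ℕ) (hq : 6 ≤ q) (hqn : q + 1 ≤ n) :
    Nf n q = 162 + (q-6) * 2 * 48 +
      ∑ v ∈ (Cfin n q).filter (fun v => (q:ℤ)-3 ≤ v.1), FP (memB n q) v := by
  unfold Nf
  rw [← Finset.sum_filter_add_sum_filter_not (Cfin n q) (fun v => v.1 ≤ (q:ℤ)-4)]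
  have hsplit2 : (Cfin n q).filter (fun v => ¬ v.1 ≤ (q:ℤ)-4)
      = (Cfin n q).filter (fun v => (q:ℤ)-3 ≤ v.1) := by
    apply Finset.filter_congr
    intro v _
    constructor <;> (intro h; omega)
  rw [hsplit2]
  congr 1
  rw [← Finset.sum_filter_add_sum_filter_not ((Cfin n q).filter (fun v => v.1 ≤ (q:ℤ)-4))
      (fun v => v.1 ≤ 2)]
  have hA : ((Cfin n q).filter (fun v => v.1 ≤ (q:ℤ)-4)).filter (fun v => v.1 ≤ 2) = SA := by
    ext v
    simp only [Finset.mem_filter, mem_Cfin, SA, Finset.mem_product, Finset.mem_Icc]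
    unfold memB
    omega
  have hM : ((Cfin n q).filter (fun v => v.1 ≤ (q:ℤ)-4)).filter (fun v => ¬ v.1 ≤ 2)
      = (Finset.Icc (3:ℤ) ((q:ℤ)-4)) ×ˢ (Finset.Icc (0:ℤ) 1) := by
    ext v
    simp only [Finset.mem_filter, mem_Cfin, Finset.mem_product, Finset.mem_Icc]
    unfold memB
    omega
  rw [hA, hM, sumA n q hq]
  congr 1
  have hconst : ∀ v ∈ (Finset.Icc (3:ℤ) ((q:ℤ)-4)) ×ˢ (Finset.Icc (0:ℤ) 1),
      FP (memB n q) v = 48 := by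
    intro v hv
    simp only [Finset.mem_product, Finset.mem_Icc] at hv
    exact Fmid n q hq v ⟨hv.2.1, hv.2.2⟩ hv.1.1 hv.1.2
  rw [Finset.sum_congr rfl hconst, Finset.sum_const, Finset.card_product,
      Int.card_Icc, Int.card_Icc]
  have hc1 : ((q:ℤ) - 4 + 1 - 3).toNat = q - 6 := by omega
  have hc2 : ((1:ℤ) + 1 - 0).toNat = 2 := by decide
  rw [hc1, hc2, smul_eq_mul]

lemma tail_small (n q s : ℕ) (hq : 6 ≤ q) (hn : n = q + 1 + s) (hs : s ≤ 5) :
    ∑ v ∈ (Cfin n q).filter (fun v => (q:ℤ)-3 ≤ v.1), FP (memB n q) v = TKval s := by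
  have hT : (Cfin n q).filter (fun v => (q:ℤ)-3 ≤ v.1)
      = (Stail s).image (fun w => w + ((q:ℤ)-3, 0)) := by
    ext v
    simp only [Finset.mem_filter, mem_Cfin, Finset.mem_image, Stail, Finset.mem_union,
      Finset.mem_product, Finset.mem_Icc]
    constructor
    · rintro ⟨hm, hx⟩
      refine ⟨(v.1 - ((q:ℤ)-3), v.2), ?_, ?_⟩
      · unfold memB at hm
        simp only []
        omega
      · have : (v.1 - ((q:ℤ)-3), v.2) + ((q:ℤ)-3, 0) = (v.1, v.2) := by
          simp [Prod.ext_iff]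
        rw [this]
    · rintro ⟨w, hw, rfl⟩
      simp only [Prod.fst_add, Prod.snd_add]
      unfold memB
      simp only [Prod.fst_add, Prod.snd_add]
      omega
  rw [hT, Finset.sum_image (by intro a _ b _ h; exact add_right_cancel h)]
  have hcong : ∀ w ∈ Stail s, FP (memB n q) (w + ((q:ℤ)-3, 0)) = FP (Ptail s) w := by
    intro w hw
    simp only [Stail, Finset.mem_union, Finset.mem_product, Finset.mem_Icc] at hw
    apply FP_congr
    intro z hz
    unfold memB Ptail
    simp only [Prod.fst_add, Prod.snd_add]
    omega
  rw [Finset.sum_congr rfl hcong]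
  exact tail_const s hs

lemma Nf_small (n q s : ℕ) (hq : 6 ≤ q) (hn : n = q + 1 + s) (hs : s ≤ 5) :
    Nf n q + 414 = 96*q + TKval s := by
  rw [Nf_split n q hq (by omega), tail_small n q s hq hn hs]
  omega

set_option maxHeartbeats 1000000 in
lemma tail_big (n q s : ℕ) (hq : 6 ≤ q) (hn : n = q + 1 + s) (hs : 6 ≤ s) :
    ∑ v ∈ (Cfin n q).filter (fun v => (q:ℤ)-3 ≤ v.1), FP (memB n q) v
      = 740 + (s-6) * 2 * 48 + 258 := by
  set T := (Cfin n q).filter (fun v => (q:ℤ)-3 ≤ v.1) with hTdef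
  rw [← Finset.sum_filter_add_sum_filter_not T (fun v => v.2 ≤ 3)]
  have hT1 : T.filter (fun v => v.2 ≤ 3) = S3.image (fun w => w + ((q:ℤ)-3, 0)) := by
    ext v
    simp only [hTdef, Finset.mem_filter, mem_Cfin, Finset.mem_image, S3, Finset.mem_union,
      Finset.mem_product, Finset.mem_Icc]
    constructor
    · rintro ⟨⟨hm, hx⟩, hy⟩
      refine ⟨(v.1 - ((q:ℤ)-3), v.2), ?_, ?_⟩
      · unfold memB at hm
        simp only []
        omega
      · have : (v.1 - ((q:ℤ)-3), v.2) + ((q:ℤ)-3, 0) = (v.1, v.2) := by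
          simp [Prod.ext_iff]
        rw [this]
    · rintro ⟨w, hw, rfl⟩
      simp only [Prod.fst_add, Prod.snd_add]
      unfold memB
      simp only [Prod.fst_add, Prod.snd_add]
      omega
  rw [hT1, Finset.sum_image (by intro a _ b _ h; exact add_right_cancel h)]
  have hcong1 : ∀ w ∈ S3, FP (memB n q) (w + ((q:ℤ)-3, 0)) = FP P3 w := by
    intro w hw
    simp only [S3, Finset.mem_union, Finset.mem_product, Finset.mem_Icc] at hw
    apply FP_congr
    intro z hz
    unfold memB P3
    simp only [Prod.fst_add, Prod.snd_add]
    omega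
  rw [Finset.sum_congr rfl hcong1, (by decide : ∑ w ∈ S3, FP P3 w = 740), add_assoc]
  congr 1
  rw [← Finset.sum_filter_add_sum_filter_not (T.filter (fun v => ¬ v.2 ≤ 3))
      (fun v => v.2 ≤ (n:ℤ)-(q:ℤ)-4)]
  have hT2 : (T.filter (fun v => ¬ v.2 ≤ 3)).filter (fun v => v.2 ≤ (n:ℤ)-(q:ℤ)-4)
      = (Finset.Icc (q:ℤ) ((q:ℤ)+1)) ×ˢ (Finset.Icc (4:ℤ) ((n:ℤ)-(q:ℤ)-4)) := by
    ext v
    simp only [hTdef, Finset.mem_filter, mem_Cfin, Finset.mem_product, Finset.mem_Icc]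
    unfold memB
    omega
  have hT3 : (T.filter (fun v => ¬ v.2 ≤ 3)).filter (fun v => ¬ v.2 ≤ (n:ℤ)-(q:ℤ)-4)
      = S5.image (fun w => w + ((q:ℤ), (n:ℤ)-(q:ℤ)-3)) := by
    ext v
    simp only [hTdef, Finset.mem_filter, mem_Cfin, Finset.mem_image, S5,
      Finset.mem_product, Finset.mem_Icc]
    constructor
    · rintro ⟨⟨⟨hm, hx⟩, hy1⟩, hy2⟩
      refine ⟨(v.1 - (q:ℤ), v.2 - ((n:ℤ)-(q:ℤ)-3)), ?_, ?_⟩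
      · unfold memB at hm
        simp only []
        omega
      · have : (v.1 - (q:ℤ), v.2 - ((n:ℤ)-(q:ℤ)-3)) + ((q:ℤ), (n:ℤ)-(q:ℤ)-3) = (v.1, v.2) := by
          simp [Prod.ext_iff]
        rw [this]
    · rintro ⟨w, hw, rfl⟩
      simp only [Prod.fst_add, Prod.snd_add]
      unfold memB
      simp only [Prod.fst_add, Prod.snd_add]
      omega
  rw [hT2, hT3]
  have hcongM : ∀ v ∈ (Finset.Icc (q:ℤ) ((q:ℤ)+1)) ×ˢ (Finset.Icc (4:ℤ) ((n:ℤ)-(q:ℤ)-4)),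
      FP (memB n q) v = 48 := by
    intro v hv
    simp only [Finset.mem_product, Finset.mem_Icc] at hv
    exact Fvert n q hq v hv.1 hv.2.1 hv.2.2
  rw [Finset.sum_congr rfl hcongM, Finset.sum_const, Finset.card_product,
      Int.card_Icc, Int.card_Icc]
  have hc1 : ((q:ℤ) + 1 + 1 - (q:ℤ)).toNat = 2 := by omega
  have hc2 : ((n:ℤ)-(q:ℤ)-4 + 1 - 4).toNat = s - 6 := by omega
  rw [hc1, hc2, smul_eq_mul]
  congr 1
  · omega
  rw [Finset.sum_image (by intro a _ b _ h; exact add_right_cancel h)]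
  have hcong3 : ∀ w ∈ S5, FP (memB n q) (w + ((q:ℤ), (n:ℤ)-(q:ℤ)-3)) = FP P5 w := by
    intro w hw
    simp only [S5, Finset.mem_product, Finset.mem_Icc] at hw
    apply FP_congr
    intro z hz
    unfold memB P5
    simp only [Prod.fst_add, Prod.snd_add]
    omega
  rw [Finset.sum_congr rfl hcong3]
  decide

lemma Nf_big (n q s : ℕ) (hq : 6 ≤ q) (hn : n = q + 1 + s) (hs : 6 ≤ s) :
    Nf n q = 96*q + 96*s + 8 := by
  rw [Nf_split n q hq (by omega), tail_big n q s hq hn hs]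
  omega


set_option maxRecDepth 40000 in
lemma Nf94 : Nf 9 4 = 776 := by decide
set_option maxRecDepth 40000 in
lemma Nf95 : Nf 9 5 = 774 := by decide
set_option maxRecDepth 40000 in
lemma Nf105 : Nf 10 5 = 872 := by decide
set_option maxRecDepth 40000 in
lemma Nf115 : Nf 11 5 = 968 := by decide

lemma NfLi (n : ℕ) (hn : 9 ≤ n) : Nf n (n-1) + 156 = 96 * n := by
  have h := Nf_small n (n-1) 0 (by omega) (by omega) (by omega)
  have ht : TKval 0 = 354 := rfl
  rw [ht] at h; omega

lemma NfA (n : ℕ) (hn : 9 ≤ n) : Nf n (n-2) + 116 = 96 * n := by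
  have h := Nf_small n (n-2) 1 (by omega) (by omega) (by omega)
  have ht : TKval 1 = 490 := rfl
  rw [ht] at h; omega

lemma NfB (n : ℕ) (hn : 9 ≤ n) : Nf n (n-3) + 96 = 96 * n := by
  have h := Nf_small n (n-3) 2 (by omega) (by omega) (by omega)
  have ht : TKval 2 = 606 := rfl
  rw [ht] at h; omega

lemma NfC (n : ℕ) (hn : 9 ≤ n) : Nf n (n-4) + 90 = 96 * n := by
  rcases eq_or_lt_of_le hn with h9 | h10
  · rw [show n - 4 = 5 by omega, ← h9, Nf95]
  · have h := Nf_small n (n-4) 3 (by omega) (by omega) (by omega)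
    have ht : TKval 3 = 708 := rfl
    rw [ht] at h; omega

lemma NfD (n : ℕ) (hn : 9 ≤ n) : Nf n (n-5) + 88 = 96 * n := by
  rcases (by omega : n = 9 ∨ n = 10 ∨ 11 ≤ n) with h | h | h
  · rw [show n - 5 = 4 by omega, h, Nf94]
  · rw [show n - 5 = 5 by omega, h, Nf105]
  · have hh := Nf_small n (n-5) 4 (by omega) (by omega) (by omega)
    have ht : TKval 4 = 806 := rfl
    rw [ht] at hh; omega

lemma NfE (n q s : ℕ) (hqs : (6 ≤ q ∧ 5 ≤ s) ∨ (q = 5 ∧ s = 5)) (hn : n = q + 1 + s) :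
    Nf n q + 88 = 96 * n := by
  rcases hqs with ⟨hq, hs⟩ | ⟨hq, hs⟩
  · rcases eq_or_lt_of_le hs with h5 | h6
    · have hh := Nf_small n q 5 hq (by omega) (by omega)
      have ht : TKval 5 = 902 := rfl
      rw [ht] at hh; omega
    · have hh := Nf_big n q s hq hn (by omega)
      omega
  · subst hq; subst hs
    rw [hn, Nf115]


/-- **Proposition 2.10 (increasing part).** For `n ≥ 9`:
`ZC2(Li_n) < ZC2(PC(1^{n-3},2)) < ZC2(PC(1^{n-4},2,1)) < ZC2(PC(1^{n-5},2,1,1))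
  < ZC2(PC(1^{n-6},2,1,1,1))`,
and `ZC2(PC(1^{n-6},2,1,1,1)) = ZC2(PC(1^i,2,1^{n-3-i}))` for every
`⌊(n-2)/2⌋ ≤ i ≤ n - 7`. -/
theorem ZC2_single_kink_chains
    (n : ℕ) (hn : 9 ≤ n)
    (cLi cA cB cC cD : ℕ → ℤ × ℤ)
    (hcLi : IsPolyominoChain n cLi) (hcA : IsPolyominoChain n cA)
    (hcB : IsPolyominoChain n cB) (hcC : IsPolyominoChain n cC)
    (hcD : IsPolyominoChain n cD)
    (hLLi : HasLinks n cLi fun _ => 1)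
    (hLA : HasLinks n cA fun k => if k = n then 2 else 1)
    (hLB : HasLinks n cB fun k => if k = n - 1 then 2 else 1)
    (hLC : HasLinks n cC fun k => if k = n - 2 then 2 else 1)
    (hLD : HasLinks n cD fun k => if k = n - 3 then 2 else 1) :
    ZC2 n cLi < ZC2 n cA ∧ ZC2 n cA < ZC2 n cB ∧ ZC2 n cB < ZC2 n cC ∧
    ZC2 n cC < ZC2 n cD ∧
    ∀ i : ℕ, (n - 2) / 2 ≤ i → i ≤ n - 7 →
      ∀ cE : ℕ → ℤ × ℤ, IsPolyominoChain n cE →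
        HasLinks n cE (fun k => if k = i + 3 then 2 else 1) →
        ZC2 n cD = ZC2 n cE := by
  have key : ∀ (c : ℕ → ℤ×ℤ) (p : ℕ), 3 ≤ p → p ≤ n+1 → IsPolyominoChain n c →
      (∀ k, 3 ≤ k → k ≤ n → link c k = if k = p then 2 else 1) →
      ZC2 n c = Nf n (p-2) / 2 := by
    intro c p hp3 hpn hc hL
    obtain ⟨u, w, hu, hw, hwu, hwu0, hform⟩ := classify n p c (by omega) hp3 hpn hc hL
    rw [affine_transfer n c (gam (p-2)) (c 0) u w hu hw hwu hwu0 hform,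
        ZC2_gam n (p-2) (by omega)]
  have hLi : ZC2 n cLi = Nf n (n-1) / 2 := by
    have h := key cLi (n+1) (by omega) (by omega) hcLi
      (fun k h3 hk => by rw [hLLi k h3 hk, if_neg (by omega)])
    rwa [show n+1-2 = n-1 by omega] at h
  have hA : ZC2 n cA = Nf n (n-2) / 2 := key cA n (by omega) (by omega) hcA hLA
  have hB : ZC2 n cB = Nf n (n-3) / 2 := by
    have h := key cB (n-1) (by omega) (by omega) hcB hLB
    rwa [show n-1-2 = n-3 by omega] at h
  have hC : ZC2 n cC = Nf n (n-4) / 2 := by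
    have h := key cC (n-2) (by omega) (by omega) hcC hLC
    rwa [show n-2-2 = n-4 by omega] at h
  have hD : ZC2 n cD = Nf n (n-5) / 2 := by
    have h := key cD (n-3) (by omega) (by omega) hcD hLD
    rwa [show n-3-2 = n-5 by omega] at h
  have vLi := NfLi n hn
  have vA := NfA n hn
  have vB := NfB n hn
  have vC := NfC n hn
  have vD := NfD n hn
  refine ⟨?_, ?_, ?_, ?_, ?_⟩
  · rw [hLi, hA]; omega
  · rw [hA, hB]; omega
  · rw [hB, hC]; omega
  · rw [hC, hD]; omega
  · intro i hi1 hi2 cE hcE hLE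
    have hi3 : 11 ≤ n := by omega
    have hE : ZC2 n cE = Nf n (i+1) / 2 := by
      have h := key cE (i+3) (by omega) (by omega) hcE hLE
      rwa [show i+3-2 = i+1 by omega] at h
    have vE : Nf n (i+1) + 88 = 96 * n := by
      apply NfE n (i+1) (n-2-i) _ (by omega)
      omega
    rw [hD, hE]; omega
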